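/- arXiv:2309.16712 — 3 statements merged into one kernel-verified Lean document; each statement's English description precedes it below -/
import Mathlib

section
/- Given data sizes d_1 \ge d_2 \ge ... \ge d_{J'} \ge 0 for participating types 1,...,J' and a common network cost c \ge 0, the rewards defined by r_{J'} = \theta_{J'} d_{J'} + c and r_j = \theta_j d_j + \sum_{k=j+1}^{J'} (\theta_k - \theta_{k-1}) d_k + c for j < J' satisfy all IC and IR constraints among participating types, and they minimize the total reward \sum_j I_j r_j among all reward vectors satisfying IC and IR for the given data sizes (where I_j > 0 is the number of type-j users). -/
/-!
The formula makes two families of constraints bind: the participation constraint of the last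
type, `r (J-1) = θ (J-1) * d (J-1) + c`, and the incentive constraint of each type `j` towards
its neighbour `j + 1`, `r j = r (j + 1) + θ j * (d j - d (j + 1))`. Any feasible reward vector
satisfies the same relations with `≥`, so by downward induction it dominates `r` pointwise.
The remaining incentive constraints follow from the adjacent ones by single crossing: `θ` is
increasing and `d` decreasing.
-/

open Finset

namespace ScreeningContract

def IncentiveCompatible (J : ℕ) (θ d r : ℕ → ℝ) : Prop :=
  ∀ j k, j < J → k < J → r k - θ j * d k ≤ r j - θ j * d j

def IndividuallyRational (J : ℕ) (θ d r : ℕ → ℝ) (c : ℝ) : Prop :=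
  ∀ j, j < J → 0 ≤ r j - θ j * d j - c

def reward (J : ℕ) (θ d : ℕ → ℝ) (c : ℝ) (j : ℕ) : ℝ :=
  θ j * d j + (∑ k ∈ Ico (j + 1) J, (θ k - θ (k - 1)) * d k) + c

variable {J : ℕ} {θ d r : ℕ → ℝ} {c : ℝ}

theorem reward_eq_reward_succ_add {j : ℕ} (hj : j + 1 < J) :
    reward J θ d c j = reward J θ d c (j + 1) + θ j * (d j - d (j + 1)) := by
  rw [reward, reward, sum_eq_sum_Ico_succ_bot hj, Nat.add_sub_cancel]
  ring

theorem reward_of_succ_eq {j : ℕ} (hj : j + 1 = J) : reward J θ d c j = θ j * d j + c := by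
  rw [reward, hj, Ico_self, sum_empty, add_zero]

theorem individuallyRational_reward (hθ : MonotoneOn θ (Set.Iio J))
    (hd : ∀ j, j < J → 0 ≤ d j) : IndividuallyRational J θ d (reward J θ d c) c := by
  intro j _
  have hrent : 0 ≤ ∑ k ∈ Ico (j + 1) J, (θ k - θ (k - 1)) * d k := by
    refine sum_nonneg fun k hk => mul_nonneg (sub_nonneg.2 ?_) (hd k (mem_Ico.1 hk).2)
    exact hθ (Set.mem_Iio.2 (by grind)) (Set.mem_Iio.2 (mem_Ico.1 hk).2) (k.sub_le 1)
  rw [reward]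
  linarith

theorem mul_sub_le_sub_of_le (hθ : MonotoneOn θ (Set.Iio J)) (hd : AntitoneOn d (Set.Iio J))
    (hstep : ∀ j, j + 1 < J → r j = r (j + 1) + θ j * (d j - d (j + 1)))
    {j k : ℕ} (hjk : j ≤ k) (hk : k < J) : θ j * (d j - d k) ≤ r j - r k := by
  induction k, hjk using Nat.le_induction with
  | base => simp
  | succ k hjk ih =>
    have hkJ : k < J := by omega
    have hθjk : θ j ≤ θ k := hθ (Set.mem_Iio.2 (by omega)) (Set.mem_Iio.2 hkJ) hjk
    have hdk : d (k + 1) ≤ d k := hd (Set.mem_Iio.2 hkJ) (Set.mem_Iio.2 hk) k.le_succ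
    linarith [ih hkJ, hstep k hk, mul_le_mul_of_nonneg_right hθjk (sub_nonneg.2 hdk)]

theorem sub_le_mul_sub_of_le (hθ : MonotoneOn θ (Set.Iio J)) (hd : AntitoneOn d (Set.Iio J))
    (hstep : ∀ j, j + 1 < J → r j = r (j + 1) + θ j * (d j - d (j + 1)))
    {j k : ℕ} (hkj : k ≤ j) (hj : j < J) : r k - r j ≤ θ j * (d k - d j) := by
  induction j, hkj using Nat.le_induction with
  | base => simp
  | succ j hkj ih =>
    have hjJ : j < J := by omega
    have hθj : θ j ≤ θ (j + 1) := hθ (Set.mem_Iio.2 hjJ) (Set.mem_Iio.2 hj) j.le_succ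
    have hdkj : d (j + 1) ≤ d k := hd (Set.mem_Iio.2 (by omega)) (Set.mem_Iio.2 hj) (by omega)
    linarith [ih hjJ, hstep j hj, mul_le_mul_of_nonneg_right hθj (sub_nonneg.2 hdkj)]

theorem incentiveCompatible_of_step (hθ : MonotoneOn θ (Set.Iio J))
    (hd : AntitoneOn d (Set.Iio J))
    (hstep : ∀ j, j + 1 < J → r j = r (j + 1) + θ j * (d j - d (j + 1))) :
    IncentiveCompatible J θ d r := by
  intro j k hj hk
  rcases le_total j k with hjk | hkj
  · linarith [mul_sub_le_sub_of_le hθ hd hstep hjk hk]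
  · linarith [sub_le_mul_sub_of_le hθ hd hstep hkj hj]

theorem le_of_incentiveCompatible_of_individuallyRational
    (hstep : ∀ j, j + 1 < J → r j = r (j + 1) + θ j * (d j - d (j + 1)))
    (hlast : ∀ j, j + 1 = J → r j = θ j * d j + c) {r' : ℕ → ℝ}
    (hIC : IncentiveCompatible J θ d r') (hIR : IndividuallyRational J θ d r' c)
    {j : ℕ} (hj : j < J) : r j ≤ r' j := by
  have hjJ : j ≤ J - 1 := by omega
  induction hjJ using Nat.decreasingInduction with
  | self => linarith [hlast (J - 1) (by omega), hIR (J - 1) hj]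
  | of_succ k hk ih =>
    rw [hstep k (by omega)]
    linarith [ih (by omega), hIC k (k + 1) hj (by omega)]

end ScreeningContract

open ScreeningContract

theorem stmt6_general (J : ℕ) (θ d : ℕ → ℝ) (I : ℕ → ℝ) (c : ℝ)
    (hθ : ∀ j k, j < k → k < J → θ j < θ k)
    (hd0 : ∀ j, j < J → 0 ≤ d j)
    (hdmono : ∀ j k, j ≤ k → k < J → d k ≤ d j)
    (hI : ∀ j, j < J → 0 < I j)
    (r : ℕ → ℝ)
    (hr : ∀ j, j < J →
      r j = θ j * d j + (∑ k ∈ Finset.Ico (j + 1) J, (θ k - θ (k - 1)) * d k) + c) :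
    (∀ j k, j < J → k < J → r k - θ j * d k ≤ r j - θ j * d j)
    ∧ (∀ j, j < J → 0 ≤ r j - θ j * d j - c)
    ∧ (∀ r' : ℕ → ℝ,
        (∀ j k, j < J → k < J → r' k - θ j * d k ≤ r' j - θ j * d j) →
        (∀ j, j < J → 0 ≤ r' j - θ j * d j - c) →
        ∑ j ∈ Finset.range J, I j * r j ≤ ∑ j ∈ Finset.range J, I j * r' j) := by
  have hθ' : MonotoneOn θ (Set.Iio J) :=
    StrictMonoOn.monotoneOn fun j _ k hk hjk => hθ j k hjk hk
  have hd' : AntitoneOn d (Set.Iio J) := fun j _ k hk hjk => hdmono j k hjk hk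
  have hr : Set.EqOn r (reward J θ d c) (Set.Iio J) := fun j hj => hr j hj
  have hstep : ∀ j, j + 1 < J → r j = r (j + 1) + θ j * (d j - d (j + 1)) := fun j hj => by
    rw [hr (by grind), hr hj, reward_eq_reward_succ_add hj]
  have hlast : ∀ j, j + 1 = J → r j = θ j * d j + c := fun j hj => by
    rw [hr (by grind), reward_of_succ_eq hj]
  refine ⟨incentiveCompatible_of_step hθ' hd' hstep, fun j hj => ?_, fun r' hIC hIR => ?_⟩
  · rw [hr hj]
    exact individuallyRational_reward hθ' hd0 j hj
  · refine sum_le_sum fun j hj => mul_le_mul_of_nonneg_left ?_ (hI j (mem_range.1 hj)).le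
    exact le_of_incentiveCompatible_of_individuallyRational hstep hlast hIC hIR (mem_range.1 hj)

/-- The rewards r_{J'} = θ_{J'} d_{J'} + c and
r_j = θ_j d_j + Σ_{k>j} (θ_k - θ_{k-1}) d_k + c satisfy all IC and IR
constraints and minimize the total reward among all reward vectors
satisfying IC and IR for the given data sizes. (Types are indexed 0,…,J-1.) -/
theorem stmt6 (J : ℕ) (hJ : 0 < J) (θ d : ℕ → ℝ) (I : ℕ → ℝ) (c : ℝ)
    (hθpos : ∀ j, j < J → 0 < θ j)
    (hθ : ∀ j k, j < k → k < J → θ j < θ k)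
    (hd0 : ∀ j, j < J → 0 ≤ d j)
    (hdmono : ∀ j k, j ≤ k → k < J → d k ≤ d j)
    (hc : 0 ≤ c) (hI : ∀ j, j < J → 0 < I j)
    (r : ℕ → ℝ)
    (hr : ∀ j, j < J →
      r j = θ j * d j + (∑ k ∈ Finset.Ico (j + 1) J, (θ k - θ (k - 1)) * d k) + c) :
    (∀ j k, j < J → k < J → r k - θ j * d k ≤ r j - θ j * d j)
    ∧ (∀ j, j < J → 0 ≤ r j - θ j * d j - c)
    ∧ (∀ r' : ℕ → ℝ,
        (∀ j k, j < J → k < J → r' k - θ j * d k ≤ r' j - θ j * d j) →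
        (∀ j, j < J → 0 ≤ r' j - θ j * d j - c) →
        ∑ j ∈ Finset.range J, I j * r j ≤ ∑ j ∈ Finset.range J, I j * r' j) :=
  stmt6_general J θ d I c hθ hd0 hdmono hI r hr
end

section
/- Under the optimal demand formula n^*(h) = [\sqrt{(\beta h - \gamma)^2 - 3\beta\lambda} - (2\beta h + \gamma)] / (3\beta) with fixed \lambda \le -h(\beta h + 2\gamma) for all considered h, both n^*(h) and the total usage n^*(h) + h are such that n^*(h) is strictly decreasing in h while the total usage n^*(h) + h = [\sqrt{(\beta h - \gamma)^2 - 3\beta\lambda} + (\beta h - \gamma)]/(3\beta) is strictly increasing in h. In particular, slots with smaller background demand attract more federated-learning users yet still have smaller total network demand. -/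
/-!
Write `s(h) = √((βh - γ)² - 3βλ)`. Since `-3βλ > 0`, the map `x ↦ √(x² + c)` with `c > 0` is
strictly 1-Lipschitz, so `|s(h₂) - s(h₁)| < β (h₂ - h₁)` for `h₁ < h₂`. As
`3β n*(h) = s(h) - 2βh - γ` and `3β (n*(h) + h) = s(h) + βh - γ`, the first decreases and the
second increases.
-/

theorem abs_sqrt_sq_add_sub_sqrt_sq_add_lt {c : ℝ} (hc : 0 < c) {a b : ℝ} (hab : a ≠ b) :
    |√(a ^ 2 + c) - √(b ^ 2 + c)| < |a - b| := by
  set u := √(a ^ 2 + c)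
  set v := √(b ^ 2 + c)
  have hu : |a| < u := Real.lt_sqrt_of_sq_lt (by rw [sq_abs]; linarith)
  have hv : |b| < v := Real.lt_sqrt_of_sq_lt (by rw [sq_abs]; linarith)
  have hsq : (u - v) * (u + v) = (a - b) * (a + b) := by
    have hu2 : u ^ 2 = a ^ 2 + c := Real.sq_sqrt (by positivity)
    have hv2 : v ^ 2 = b ^ 2 + c := Real.sq_sqrt (by positivity)
    linear_combination hu2 - hv2
  have hsum : |a + b| < u + v := (abs_add_le a b).trans_lt (add_lt_add hu hv)
  have hpos : 0 < u + v := (abs_nonneg _).trans_lt hsum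
  have hdiff : 0 < |a - b| := abs_pos.mpr (sub_ne_zero.mpr hab)
  refine lt_of_mul_lt_mul_right ?_ hpos.le
  calc |u - v| * (u + v) = |a - b| * |a + b| := by
        rw [← abs_of_pos hpos, ← abs_mul, hsq, abs_mul]
    _ < |a - b| * (u + v) := mul_lt_mul_of_pos_left hsum hdiff

theorem stmt15_general (β γ lam : ℝ) (hβ : 0 < β) (hlam : lam < 0) :
    let nstar : ℝ → ℝ := fun h =>
      (Real.sqrt ((β * h - γ) ^ 2 - 3 * β * lam) - (2 * β * h + γ)) / (3 * β)
    ∀ h1 h2 : ℝ, 0 ≤ h1 → 0 ≤ h2 →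
      lam + h1 * (β * h1 + 2 * γ) ≤ 0 → lam + h2 * (β * h2 + 2 * γ) ≤ 0 →
      h1 < h2 → nstar h2 < nstar h1 ∧ nstar h1 + h1 < nstar h2 + h2 := by
  intro nstar h1 h2 _ _ _ _ hlt
  have h3β : 0 < 3 * β := by positivity
  have hstep : 0 < β * (h2 - h1) := mul_pos hβ (sub_pos.mpr hlt)
  have key := abs_sqrt_sq_add_sub_sqrt_sq_add_lt (c := -(3 * β * lam)) (by nlinarith)
    (a := β * h2 - γ) (b := β * h1 - γ) (by nlinarith)
  rw [← sub_eq_add_neg, ← sub_eq_add_neg, show β * h2 - γ - (β * h1 - γ) = β * (h2 - h1) by ring,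
    abs_of_pos hstep, abs_lt] at key
  constructor
  · exact div_lt_div_of_pos_right (by linarith) h3β
  · rw [div_add' _ _ _ h3β.ne', div_add' _ _ _ h3β.ne']
    exact div_lt_div_of_pos_right (by linarith) h3β

/-- Under the optimal demand formula, n*(h) is strictly decreasing in h
while the total usage n*(h) + h is strictly increasing in h, on the domain
where λ + h(βh + 2γ) ≤ 0 (ensuring n*(h) ≥ 0). -/
theorem stmt15 (β γ lam : ℝ) (hβ : 0 < β) (hγ : 0 < γ) (hlam : lam < 0) :
    let nstar : ℝ → ℝ := fun h =>
      (Real.sqrt ((β * h - γ) ^ 2 - 3 * β * lam) - (2 * β * h + γ)) / (3 * β)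
    ∀ h1 h2 : ℝ, 0 ≤ h1 → 0 ≤ h2 →
      lam + h1 * (β * h1 + 2 * γ) ≤ 0 → lam + h2 * (β * h2 + 2 * γ) ≤ 0 →
      h1 < h2 → nstar h2 < nstar h1 ∧ nstar h1 + h1 < nstar h2 + h2 :=
  stmt15_general β γ lam hβ hlam
end

section
/- In the two-type contract problem (J = 2) with interior optimum, the server's optimal data size for type 2 is d_2^* = [I_2^{1/3} (2\xi)^{2/3} ((I_1+I_2)\theta_2 - I_1\theta_1)^{2/3}]^{-1} - I_1 d^{max} / I_2, provided this value lies in [0, d^{max}]: it is the unique stationary point of the server's cost \frac{1}{\sqrt{I_1 d^{max} + I_2 d_2}} + \xi [I_1(\theta_1 d^{max} + (\theta_2-\theta_1) d_2) + I_2 \theta_2 d_2 + (I_1+I_2) c] as a function of d_2, and this cost function is strictly convex in d_2 on (−I_1 d^{max}/I_2, \infty). -/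
/-! With `a = I₁ dᵐᵃˣ`, `b = I₂` and `k = ξ ((I₁ + I₂) θ₂ - I₁ θ₁) > 0`, the cost is
`(a + b y)^(-1/2) + k y + const`. Its derivative `k - (b/2) (a + b y)^(-3/2)` is strictly
increasing where `a + b y > 0`, which gives strict convexity and at most one stationary point,
and it vanishes where `a + b y = (b / (2k))^(2/3)`: this is the closed form of `d₂*`. -/

open Real Set

noncomputable def invSqrtCost (a b k m y : ℝ) : ℝ := 1 / √(a + b * y) + (k * y + m)

section

variable {a b k m x : ℝ}

lemma mem_Ioi_neg_div_iff (hb : 0 < b) : x ∈ Ioi (-a / b) ↔ 0 < a + b * x := by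
  rw [mem_Ioi, div_lt_iff₀ hb]
  constructor <;> intro h <;> linarith

lemma hasDerivAt_invSqrtCost (hx : 0 < a + b * x) :
    HasDerivAt (invSqrtCost a b k m) (k - b / 2 * (a + b * x) ^ (-(3 / 2 : ℝ))) x := by
  have haff : HasDerivAt (fun y => a + b * y) b x := by
    simpa using ((hasDerivAt_id x).const_mul b).const_add a
  have hrpow := haff.rpow_const (p := -(1 / 2 : ℝ)) (Or.inl hx.ne')
  have hsum := hrpow.add (((hasDerivAt_id x).const_mul k).add_const m)
  refine (hsum.congr_of_eventuallyEq ?_).congr_deriv ?_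
  · filter_upwards [haff.continuousAt.eventually (lt_mem_nhds hx)] with y hy
    simp only [invSqrtCost, sqrt_eq_rpow, rpow_neg hy.le, one_div, Pi.add_apply, id]
  · rw [show -(1 / 2 : ℝ) - 1 = -(3 / 2) by norm_num]
    ring

lemma deriv_invSqrtCost (hx : 0 < a + b * x) :
    deriv (invSqrtCost a b k m) x = k - b / 2 * (a + b * x) ^ (-(3 / 2 : ℝ)) :=
  (hasDerivAt_invSqrtCost hx).deriv

lemma strictMonoOn_deriv_invSqrtCost (hb : 0 < b) :
    StrictMonoOn (deriv (invSqrtCost a b k m)) (Ioi (-a / b)) := by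
  intro x hx y hy hxy
  rw [mem_Ioi_neg_div_iff hb] at hx hy
  rw [deriv_invSqrtCost hx, deriv_invSqrtCost hy]
  have hpow : (a + b * y) ^ (-(3 / 2 : ℝ)) < (a + b * x) ^ (-(3 / 2 : ℝ)) :=
    rpow_lt_rpow_of_neg hx (by nlinarith) (by norm_num)
  nlinarith [hpow]

lemma continuousOn_invSqrtCost (hb : 0 < b) :
    ContinuousOn (invSqrtCost a b k m) (Ioi (-a / b)) := by
  intro x hx
  rw [mem_Ioi_neg_div_iff hb] at hx
  exact (hasDerivAt_invSqrtCost hx).continuousAt.continuousWithinAt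

lemma strictConvexOn_invSqrtCost (hb : 0 < b) :
    StrictConvexOn ℝ (Ioi (-a / b)) (invSqrtCost a b k m) :=
  StrictMonoOn.strictConvexOn_of_deriv (convex_Ioi _) (continuousOn_invSqrtCost hb)
    (by simpa only [interior_Ioi] using strictMonoOn_deriv_invSqrtCost hb)

lemma deriv_invSqrtCost_eq_zero (hb : 0 < b) (hk : 0 < k)
    (hx : a + b * x = (b / (2 * k)) ^ (2 / 3 : ℝ)) :
    deriv (invSqrtCost a b k m) x = 0 := by
  have hpos : 0 < b / (2 * k) := by positivity
  rw [deriv_invSqrtCost (hx ▸ rpow_pos_of_pos hpos _), hx, ← rpow_mul hpos.le,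
    show (2 / 3 : ℝ) * -(3 / 2) = -1 by norm_num, rpow_neg_one]
  field_simp
  ring

lemma self_div_rpow_third_mul_rpow_two_thirds {b z : ℝ} (hb : 0 < b) (hz : 0 ≤ z) :
    b / (b ^ (1 / 3 : ℝ) * z ^ (2 / 3 : ℝ)) = (b / z) ^ (2 / 3 : ℝ) := by
  have hsplit : b ^ (1 / 3 : ℝ) * b ^ (2 / 3 : ℝ) = b := by
    rw [← rpow_add hb]; norm_num
  rw [div_rpow hb.le hz]
  nth_rewrite 1 [← hsplit]
  rw [mul_div_mul_left _ _ (rpow_pos_of_pos hb _).ne']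

end

theorem stmt17_general (θ1 θ2 I1 I2 ξ dmax c : ℝ)
    (hθ1 : 0 < θ1) (hθ12 : θ1 < θ2) (hI1 : 0 < I1) (hI2 : 0 < I2)
    (hξ : 0 < ξ) :
    let W : ℝ → ℝ := fun d2 =>
      1 / Real.sqrt (I1 * dmax + I2 * d2)
        + ξ * (I1 * θ1 * dmax + I1 * (θ2 - θ1) * d2 + I2 * θ2 * d2 + (I1 + I2) * c)
    let dstar : ℝ :=
      1 / (I2 ^ ((1 : ℝ) / 3) * (2 * ξ) ^ ((2 : ℝ) / 3)
            * ((I1 + I2) * θ2 - I1 * θ1) ^ ((2 : ℝ) / 3))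
        - I1 * dmax / I2
    0 ≤ dstar → dstar ≤ dmax →
      StrictConvexOn ℝ (Set.Ioi (-(I1 * dmax) / I2)) W
      ∧ deriv W dstar = 0
      ∧ ∀ x ∈ Set.Ioi (-(I1 * dmax) / I2), deriv W x = 0 → x = dstar := by
  intro W dstar _ _
  set A := (I1 + I2) * θ2 - I1 * θ1
  have hA : 0 < A := by nlinarith
  have hW : W = invSqrtCost (I1 * dmax) I2 (ξ * A) (ξ * (I1 * θ1 * dmax + (I1 + I2) * c)) := by
    funext y
    simp only [W, invSqrtCost, A]
    ring
  have hdstar : I1 * dmax + I2 * dstar = (I2 / (2 * (ξ * A))) ^ (2 / 3 : ℝ) := by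
    rw [← mul_assoc, ← self_div_rpow_third_mul_rpow_two_thirds hI2 (by positivity),
      mul_rpow (by positivity) hA.le, ← mul_assoc]
    simp only [dstar, A]
    field_simp
    ring
  have hstat := deriv_invSqrtCost_eq_zero (m := ξ * (I1 * θ1 * dmax + (I1 + I2) * c)) hI2
    (mul_pos hξ hA) hdstar
  rw [hW]
  refine ⟨strictConvexOn_invSqrtCost hI2, hstat, fun x hx hx0 => ?_⟩
  have hdstar_mem : dstar ∈ Ioi (-(I1 * dmax) / I2) :=
    (mem_Ioi_neg_div_iff hI2).2 (hdstar ▸ rpow_pos_of_pos (by positivity) _)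
  exact (strictMonoOn_deriv_invSqrtCost hI2).injOn hx hdstar_mem (hx0.trans hstat.symm)

/-- Two-type contract problem: the server's cost W(d₂) is strictly convex on
(-I₁dᵐᵃˣ/I₂, ∞), and d₂* = [I₂^{1/3}(2ξ)^{2/3}((I₁+I₂)θ₂ - I₁θ₁)^{2/3}]⁻¹
  - I₁dᵐᵃˣ/I₂ is its unique stationary point, provided d₂* ∈ [0, dᵐᵃˣ]. -/
theorem stmt17 (θ1 θ2 I1 I2 ξ dmax c : ℝ)
    (hθ1 : 0 < θ1) (hθ12 : θ1 < θ2) (hI1 : 0 < I1) (hI2 : 0 < I2)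
    (hξ : 0 < ξ) (hdmax : 0 < dmax) (hc : 0 ≤ c) :
    let W : ℝ → ℝ := fun d2 =>
      1 / Real.sqrt (I1 * dmax + I2 * d2)
        + ξ * (I1 * θ1 * dmax + I1 * (θ2 - θ1) * d2 + I2 * θ2 * d2 + (I1 + I2) * c)
    let dstar : ℝ :=
      1 / (I2 ^ ((1 : ℝ) / 3) * (2 * ξ) ^ ((2 : ℝ) / 3)
            * ((I1 + I2) * θ2 - I1 * θ1) ^ ((2 : ℝ) / 3))
        - I1 * dmax / I2
    0 ≤ dstar → dstar ≤ dmax →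
      StrictConvexOn ℝ (Set.Ioi (-(I1 * dmax) / I2)) W
      ∧ deriv W dstar = 0
      ∧ ∀ x ∈ Set.Ioi (-(I1 * dmax) / I2), deriv W x = 0 → x = dstar :=
  stmt17_general θ1 θ2 I1 I2 ξ dmax c hθ1 hθ12 hI1 hI2 hξ
end
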